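/- arXiv:1501.02861 — 5 statements merged into one kernel-verified Lean document; each statement's English description precedes it below -/
import Mathlib

section
/- If f : ℝᵈ → ℝᵈ is an affine map, f(0) = 0, and f preserves isosceles triangles (i.e., ‖x - y‖ = ‖x - z‖ implies ‖f(x) - f(y)‖ = ‖f(x) - f(z)‖ for all x, y, z in an open ball around 0), then there exists a ≥ 0 such that ‖f(x)‖ = a‖x‖ for all x ∈ ℝᵈ, i.e., f is a linear similarity. -/
/-- An affine map fixing 0 that preserves isosceles triangles on an open ball
around 0 is a linear similarity. -/
theorem stmt0 {d : ℕ}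
    (f : EuclideanSpace ℝ (Fin d) →ᵃ[ℝ] EuclideanSpace ℝ (Fin d))
    (hf0 : f 0 = 0) (r : ℝ) (hr : 0 < r)
    (hiso : ∀ x ∈ Metric.ball (0 : EuclideanSpace ℝ (Fin d)) r,
      ∀ y ∈ Metric.ball (0 : EuclideanSpace ℝ (Fin d)) r,
      ∀ z ∈ Metric.ball (0 : EuclideanSpace ℝ (Fin d)) r,
        ‖x - y‖ = ‖x - z‖ → ‖f x - f y‖ = ‖f x - f z‖) :
    ∃ a : ℝ, 0 ≤ a ∧ ∀ x, ‖f x‖ = a * ‖x‖ := by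
  -- f is linear since f 0 = 0
  have flin : ∀ x, f x = f.linear x := by
    intro x
    have h := f.map_vadd 0 x
    simpa [hf0] using h
  have h0mem : (0 : EuclideanSpace ℝ (Fin d)) ∈ Metric.ball (0 : EuclideanSpace ℝ (Fin d)) r := by
    simpa using hr
  -- key: equal norms (within ball) map to equal norms
  have hkey : ∀ y z : EuclideanSpace ℝ (Fin d), ‖y‖ < r → ‖z‖ < r → ‖y‖ = ‖z‖ →
      ‖f y‖ = ‖f z‖ := by
    intro y z hy hz hyz
    have hymem : y ∈ Metric.ball (0 : EuclideanSpace ℝ (Fin d)) r := by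
      simpa [Metric.mem_ball, dist_eq_norm] using hy
    have hzmem : z ∈ Metric.ball (0 : EuclideanSpace ℝ (Fin d)) r := by
      simpa [Metric.mem_ball, dist_eq_norm] using hz
    have h := hiso 0 h0mem y hymem z hzmem (by simpa using hyz)
    simpa [hf0] using h
  by_cases hd : ∀ x : EuclideanSpace ℝ (Fin d), x = 0
  · refine ⟨0, le_refl 0, fun x => ?_⟩
    rw [hd x, hf0]
    simp
  · push_neg at hd
    obtain ⟨x0, hx0⟩ := hd
    have hx0n : (0:ℝ) < ‖x0‖ := norm_pos_iff.mpr hx0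
    set e : EuclideanSpace ℝ (Fin d) := ((r/2)/‖x0‖) • x0 with he
    have hen : ‖e‖ = r/2 := by
      rw [he, norm_smul, Real.norm_eq_abs, abs_of_pos (by positivity)]
      field_simp
    refine ⟨‖f e‖ / (r/2), by positivity, fun x => ?_⟩
    by_cases hx : x = 0
    · simp [hx, hf0]
    · have hxn : (0:ℝ) < ‖x‖ := norm_pos_iff.mpr hx
      set c : ℝ := (r/2)/‖x‖ with hc
      have hcpos : 0 < c := by positivity
      have hyn : ‖c • x‖ = r/2 := by
        rw [norm_smul, Real.norm_eq_abs, abs_of_pos hcpos, hc]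
        field_simp
      have h1 : ‖f (c • x)‖ = ‖f e‖ := by
        apply hkey
        · rw [hyn]; linarith
        · rw [hen]; linarith
        · rw [hyn, hen]
      have h2 : ‖f (c • x)‖ = c * ‖f x‖ := by
        rw [flin, flin, map_smul, norm_smul, Real.norm_eq_abs, abs_of_pos hcpos]
      rw [h2] at h1
      have : ‖f x‖ = ‖f e‖ / c := by
        field_simp at h1 ⊢
        linarith
      rw [this, hc]
      field_simp
end

section
/- Let V be an open subset of ℝᵈ containing an open ball of radius ρ/2, Λ ⊆ V with Hausdorff distance ε = sup_{y∈V} inf_{x∈Λ} ‖y - x‖, and ψ : Λ → Q an isotonic map into a bounded set Q ⊆ ℝᵈ (i.e., ‖x-y‖ < ‖x'-y'‖ implies ‖ψ(x)-ψ(y)‖ ≤ ‖ψ(x')-ψ(y')‖ for all x,y,x',y' ∈ Λ). Then there is a constant C, proportional to diam(Q)/ρ and depending only on d, such that ‖ψ(x) - ψ(x')‖ ≤ C(‖x - x'‖ + ε) for all x, x' ∈ Λ. -/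
open Metric MeasureTheory Module Set

/-!
Let `r = ‖x - x'‖`, `t = ‖ψ x - ψ x'‖` and `s = 2 (r + ε)`. The ball of radius `ρ / 2` contains
a cubic grid of `m ^ d` points with spacing `s`, where `m ≈ ρ / (4 s √d)`. Replacing each grid point
by a point of `Λ` at distance at most `ε` gives `m ^ d` points of `Λ` that are pairwise more than
`r` apart, so by isotonicity their images are pairwise at least `t` apart. These images lie in
`Q`, and comparing the volumes of disjoint balls of radius `t / 2` around them with the volume of a
ball of radius `diam Q + t / 2` gives `m t ≤ 2 diam Q + t`, that is `t ≲ √d (diam Q / ρ) (r + ε)`.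
-/

def IsotonicOn {E F : Type*} [SeminormedAddCommGroup E] [SeminormedAddCommGroup F]
    (ψ : E → F) (s : Set E) : Prop :=
  ∀ x ∈ s, ∀ y ∈ s, ∀ x' ∈ s, ∀ y' ∈ s, ‖x - y‖ < ‖x' - y'‖ → ‖ψ x - ψ y‖ ≤ ‖ψ x' - ψ y'‖

theorem card_mul_pow_le_of_pairwise_le_dist {E ι : Type*} [NormedAddCommGroup E]
    [NormedSpace ℝ E] [FiniteDimensional ℝ E] [Fintype ι] (p : ι → E) {t D : ℝ} (ht : 0 < t)
    (hD : 0 ≤ D) (hsep : Pairwise fun i j => t ≤ dist (p i) (p j))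
    (hdiam : ∀ i j, dist (p i) (p j) ≤ D) :
    (Fintype.card ι : ℝ) * (t / 2) ^ finrank ℝ E ≤ (D + t / 2) ^ finrank ℝ E := by
  cases isEmpty_or_nonempty ι
  · simp only [Fintype.card_eq_zero, Nat.cast_zero, zero_mul]
    positivity
  obtain ⟨i₀⟩ := ‹Nonempty ι›
  borelize E
  let μ : Measure E := Measure.addHaar
  have hdisj : (univ : Set ι).PairwiseDisjoint fun i => ball (p i) (t / 2) :=
    fun i _ j _ hij => ball_disjoint_ball (by linarith [hsep hij])
  have hsub : (⋃ i ∈ Finset.univ, ball (p i) (t / 2)) ⊆ ball (p i₀) (D + t / 2) := by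
    simp only [Finset.mem_univ, iUnion_true, iUnion_subset_iff]
    exact fun i => ball_subset_ball' (by linarith [hdiam i i₀])
  have hvol : ∑ i, μ (ball (p i) (t / 2)) ≤ μ (ball (p i₀) (D + t / 2)) := by
    rw [← measure_biUnion_finset (by simpa using hdisj) fun i _ => measurableSet_ball]
    exact measure_mono hsub
  simp only [μ.addHaar_ball_of_pos _ (half_pos ht),
    μ.addHaar_ball_of_pos _ (by positivity : 0 < D + t / 2), Finset.sum_const, Finset.card_univ,
    nsmul_eq_mul, ← mul_assoc] at hvol
  have hvol' := (ENNReal.mul_le_mul_iff_left (measure_ball_pos μ (0 : E) one_pos).ne'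
    measure_ball_lt_top.ne).mp hvol
  rwa [← ENNReal.ofReal_natCast, ← ENNReal.ofReal_mul (by positivity),
    ENNReal.ofReal_le_ofReal_iff (by positivity)] at hvol'

theorem exists_grid {d : ℕ} (m : ℕ) (v : EuclideanSpace ℝ (Fin d)) {s : ℝ} (hs : 0 ≤ s) :
    ∃ u : (Fin d → Fin m) → EuclideanSpace ℝ (Fin d),
      (∀ k, dist (u k) v ≤ s * m * √d) ∧ Pairwise fun k k' => s ≤ dist (u k) (u k') := by
  let g : (Fin d → Fin m) → EuclideanSpace ℝ (Fin d) := fun k =>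
    WithLp.toLp 2 fun i => (k i : ℝ)
  refine ⟨fun k => v + s • g k, fun k => ?_, fun k k' hkk' => ?_⟩
  · have hg : ‖g k‖ ≤ m * √d := by
      rw [EuclideanSpace.norm_eq, ← Real.sqrt_sq (by positivity : (0 : ℝ) ≤ m),
        ← Real.sqrt_mul (sq_nonneg _), mul_comm]
      gcongr
      refine (Finset.sum_le_card_nsmul _ _ ((m : ℝ) ^ 2) fun i _ => ?_).trans (by simp)
      simp only [g, Real.norm_natCast]
      gcongr
      exact (k i).isLt.le
    rw [dist_eq_norm, add_sub_cancel_left, norm_smul, Real.norm_of_nonneg hs, mul_assoc]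
    gcongr
  · obtain ⟨i, hi⟩ := Function.ne_iff.mp hkk'
    have hg : 1 ≤ ‖g k - g k'‖ := by
      refine le_trans ?_ (PiLp.norm_apply_le _ i)
      have : (k i : ℤ) ≠ k' i := by exact_mod_cast Fin.val_injective.ne hi
      simpa [g, Real.norm_eq_abs] using
        (Int.cast_le (R := ℝ)).mpr (Int.one_le_abs (sub_ne_zero.mpr this))
    rw [dist_eq_norm, add_sub_add_left_eq_sub, ← smul_sub, norm_smul, Real.norm_of_nonneg hs]
    exact le_mul_of_one_le_right hs hg

theorem exists_pairwise_le_dist_of_dense {d m : ℕ} {Λ : Set (EuclideanSpace ℝ (Fin d))}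
    {v : EuclideanSpace ℝ (Fin d)} {R ε s : ℝ} (hdens : ∀ y ∈ ball v R, ∃ x ∈ Λ, dist y x ≤ ε)
    (hs : 0 ≤ s) (hR : s * m * √d < R) :
    ∃ w : (Fin d → Fin m) → EuclideanSpace ℝ (Fin d),
      (∀ k, w k ∈ Λ) ∧ Pairwise fun k k' => s - 2 * ε ≤ dist (w k) (w k') := by
  obtain ⟨u, hu, husep⟩ := exists_grid m v hs
  choose w hwΛ hw using fun k => hdens (u k) ((hu k).trans_lt hR)
  refine ⟨w, hwΛ, fun k k' hkk' => ?_⟩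
  have := dist_triangle4 (u k) (w k) (w k') (u k')
  linarith [husep hkk', hw k, dist_comm (w k') (u k'), hw k']

theorem IsotonicOn.norm_sub_le {d : ℕ} {Λ Q : Set (EuclideanSpace ℝ (Fin d))}
    {ψ : EuclideanSpace ℝ (Fin d) → EuclideanSpace ℝ (Fin d)} (hψ : IsotonicOn ψ Λ)
    (hQ : Bornology.IsBounded Q) (hψQ : MapsTo ψ Λ Q) {v : EuclideanSpace ℝ (Fin d)} {ρ ε : ℝ}
    (hρ : 0 < ρ) (hdens : ∀ y ∈ ball v (ρ / 2), ∃ x ∈ Λ, dist y x ≤ ε)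
    {x x' : EuclideanSpace ℝ (Fin d)} (hx : x ∈ Λ) (hx' : x' ∈ Λ) :
    ‖ψ x - ψ x'‖ ≤ 32 * √d * (diam Q / ρ) * (‖x - x'‖ + ε) := by
  have hε : 0 ≤ ε := by
    obtain ⟨_, -, h⟩ := hdens v (mem_ball_self (half_pos hρ))
    exact dist_nonneg.trans h
  have hD : 0 ≤ diam Q := diam_nonneg
  rcases (norm_nonneg (ψ x - ψ x')).eq_or_lt with ht | ht
  · rw [← ht]; positivity
  have hxx' : x ≠ x' := by rintro rfl; simp at ht
  have hr : 0 < ‖x - x'‖ := norm_pos_iff.mpr (sub_ne_zero.mpr hxx')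
  have hd : d ≠ 0 := by rintro rfl; exact hxx' (Subsingleton.elim _ _)
  have hsd : 0 < √d := Real.sqrt_pos.mpr (by positivity)
  set s := 2 * (‖x - x'‖ + ε)
  set m := ⌊ρ / (4 * s * √d)⌋₊
  have hfit : s * m * √d < ρ / 2 := by
    have := Nat.floor_le (a := ρ / (4 * s * √d)) (by positivity)
    rw [le_div_iff₀ (by positivity)] at this
    nlinarith
  obtain ⟨w, hwΛ, hwsep⟩ := exists_pairwise_le_dist_of_dense hdens (by positivity) hfit
  have himg : Pairwise fun k k' => ‖ψ x - ψ x'‖ ≤ dist (ψ (w k)) (ψ (w k')) := by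
    intro k k' hkk'
    -- `s - 2 ε = 2 ‖x - x'‖`, which beats `‖x - x'‖` only because `x ≠ x'`
    have hsep : ‖x - x'‖ < ‖w k - w k'‖ := by rw [← dist_eq_norm (w k)]; linarith [hwsep hkk']
    exact (hψ x hx x' hx' _ (hwΛ k) _ (hwΛ k') hsep).trans_eq (dist_eq_norm _ _).symm
  have hpack := card_mul_pow_le_of_pairwise_le_dist (ψ ∘ w) ht hD himg
    fun k k' => dist_le_diam_of_mem hQ (hψQ (hwΛ k)) (hψQ (hwΛ k'))
  rw [Fintype.card_fun, Fintype.card_fin, Fintype.card_fin, finrank_euclideanSpace_fin,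
    Nat.cast_pow, ← mul_pow, pow_le_pow_iff_left₀ (by positivity) (by positivity) hd] at hpack
  have htD : ‖ψ x - ψ x'‖ ≤ diam Q :=
    (dist_eq_norm (ψ x) (ψ x')).symm.trans_le (dist_le_diam_of_mem hQ (hψQ hx) (hψQ hx'))
  have hm : ρ / (4 * s * √d) < m + 1 := Nat.lt_floor_add_one _
  rw [div_lt_iff₀ (by positivity)] at hm
  have hmt : (m + 1) * ‖ψ x - ψ x'‖ ≤ 4 * diam Q := by nlinarith
  rw [mul_div_assoc', div_mul_eq_mul_div, le_div_iff₀ hρ]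
  nlinarith

/-- Modulus-of-continuity bound for isotonic maps: an isotonic map into a
bounded set is Lipschitz up to the sample density `ε`, with constant
proportional to `diam Q / ρ` and depending only on `d`. -/
theorem stmt6 (d : ℕ) :
    ∃ K : ℝ, 0 < K ∧
      ∀ (V Λ Q : Set (EuclideanSpace ℝ (Fin d)))
        (ψ : EuclideanSpace ℝ (Fin d) → EuclideanSpace ℝ (Fin d)) (ρ ε : ℝ),
        0 < ρ → IsOpen V → Λ ⊆ V →
        (∃ v, Metric.ball v (ρ / 2) ⊆ V) →
        (∀ y ∈ V, ∃ x ∈ Λ, dist y x ≤ ε) →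
        Bornology.IsBounded Q → (∀ x ∈ Λ, ψ x ∈ Q) →
        (∀ x ∈ Λ, ∀ y ∈ Λ, ∀ x' ∈ Λ, ∀ y' ∈ Λ,
          ‖x - y‖ < ‖x' - y'‖ → ‖ψ x - ψ y‖ ≤ ‖ψ x' - ψ y'‖) →
        ∀ x ∈ Λ, ∀ x' ∈ Λ,
          ‖ψ x - ψ x'‖ ≤ K * (Metric.diam Q / ρ) * (‖x - x'‖ + ε) := by
  refine ⟨32 * (√d + 1), by positivity, ?_⟩
  rintro V Λ Q ψ ρ ε hρ - - ⟨v, hv⟩ hdens hQ hψQ hψ x hx x' hx'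
  have hε : 0 ≤ ε := by
    obtain ⟨_, -, h⟩ := hdens v (hv (mem_ball_self (half_pos hρ)))
    exact dist_nonneg.trans h
  calc ‖ψ x - ψ x'‖ ≤ 32 * √d * (diam Q / ρ) * (‖x - x'‖ + ε) :=
        IsotonicOn.norm_sub_le hψ hQ hψQ hρ (fun y hy => hdens y (hv hy)) hx hx'
    _ ≤ 32 * (√d + 1) * (diam Q / ρ) * (‖x - x'‖ + ε) := by
        gcongr
        linarith
end

section
/- Let Λ ⊆ ℝᵈ with convex hull V, set ε = δ_H(Λ, V) (Hausdorff distance), and let ψ : Λ → ℝᵈ be isotonic. Define c = diam(ψ(Λ)) / (5·diam(Λ)). Then ‖ψ(x) - ψ(x')‖ ≥ c‖x - x'‖ for all x, x' ∈ Λ with ‖x - x'‖ ≥ 4ε. -/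
/-- Lower Lipschitz bound for isotonic maps: an isotonic map on `Λ` expands
distances at least at rate `c = diam (ψ '' Λ) / (5 diam Λ)` for pairs of points
at distance at least `4ε`, where `ε` is the Hausdorff distance between `Λ` and
its convex hull. -/
theorem stmt8 {d : ℕ} (Λ : Set (EuclideanSpace ℝ (Fin d)))
    (ψ : EuclideanSpace ℝ (Fin d) → EuclideanSpace ℝ (Fin d)) (ε : ℝ)
    (hε : ∀ y ∈ convexHull ℝ Λ, ∃ x ∈ Λ, dist y x ≤ ε)
    (hiso : ∀ x ∈ Λ, ∀ y ∈ Λ, ∀ x' ∈ Λ, ∀ y' ∈ Λ,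
      ‖x - y‖ < ‖x' - y'‖ → ‖ψ x - ψ y‖ ≤ ‖ψ x' - ψ y'‖) :
    ∀ x ∈ Λ, ∀ x' ∈ Λ, 4 * ε ≤ ‖x - x'‖ →
      Metric.diam (ψ '' Λ) / (5 * Metric.diam Λ) * ‖x - x'‖ ≤ ‖ψ x - ψ x'‖ := by
  intro x hx x' hx' hr
  set r := ‖x - x'‖ with hrdef
  set M := ‖ψ x - ψ x'‖ with hMdef
  have hM0 : 0 ≤ M := norm_nonneg _
  rcases le_or_gt r 0 with h0 | h0
  · have hr0 : r = 0 := le_antisymm h0 (norm_nonneg _)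
    rw [hr0, mul_zero]; exact hM0
  have hε0 : 0 ≤ ε := by
    obtain ⟨z, hz, hdz⟩ := hε x (subset_convexHull ℝ Λ hx)
    exact le_trans dist_nonneg hdz
  have hεr : ε ≤ r / 4 := by linarith
  by_cases hbdd : Bornology.IsBounded Λ
  swap
  · rw [Metric.diam_eq_zero_of_unbounded hbdd]
    simpa using hM0
  have hrD : r ≤ Metric.diam Λ := by
    rw [hrdef, ← dist_eq_norm]
    exact Metric.dist_le_diam_of_mem hbdd hx hx'
  set D := Metric.diam Λ with hDdef
  have hD0 : 0 < D := lt_of_lt_of_le h0 hrD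
  have hC0 : 0 ≤ 5 * D / r * M :=
    mul_nonneg (div_nonneg (by linarith) h0.le) hM0
  have key : ∀ a ∈ Λ, ∀ b ∈ Λ, dist (ψ a) (ψ b) ≤ 5 * D / r * M := by
    intro a ha b hb
    by_cases hab : a = b
    · simpa [hab] using hC0
    have habn : 0 < ‖a - b‖ := by
      rw [norm_pos_iff, sub_ne_zero]; exact hab
    set n := ⌈4 * ‖a - b‖ / r⌉₊ with hn
    have hn0 : 0 < n := Nat.ceil_pos.mpr (div_pos (by linarith) h0)
    have hnR : (0:ℝ) < n := Nat.cast_pos.mpr hn0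
    set y : ℕ → EuclideanSpace ℝ (Fin d) := fun i => a + ((i:ℝ)/n) • (b - a) with hy
    have hy0 : y 0 = a := by simp [hy]
    have hyn : y n = b := by
      simp only [hy]
      rw [div_self (ne_of_gt hnR), one_smul]
      abel
    have hyhull : ∀ i ≤ n, y i ∈ convexHull ℝ Λ := by
      intro i hi
      have ht0 : (0:ℝ) ≤ (i:ℝ)/n := div_nonneg (Nat.cast_nonneg i) hnR.le
      have ht1 : (i:ℝ)/n ≤ 1 := by
        rw [div_le_one hnR]
        exact_mod_cast hi
      have hrep : y i = (1 - (i:ℝ)/n) • a + ((i:ℝ)/n) • b := by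
        simp only [hy]
        rw [smul_sub, sub_smul, one_smul]
        abel
      rw [hrep]
      exact (convex_convexHull ℝ Λ) (subset_convexHull ℝ Λ ha)
        (subset_convexHull ℝ Λ hb) (by linarith) ht0 (by ring)
    have hch : ∀ i : ℕ, ∃ z, z ∈ Λ ∧ (i ≤ n → dist (y i) z ≤ ε) := by
      intro i
      by_cases hi : i ≤ n
      · obtain ⟨z, hz, hd⟩ := hε (y i) (hyhull i hi)
        exact ⟨z, hz, fun _ => hd⟩
      · exact ⟨a, ha, fun h => absurd h hi⟩
    choose g hgΛ hgd using hch
    set w : ℕ → EuclideanSpace ℝ (Fin d) :=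
      fun i => if i = 0 then a else if n ≤ i then b else g i with hw
    have hw0 : w 0 = a := by simp [hw]
    have hwn : w n = b := by simp [hw, hn0.ne']
    have hwΛ : ∀ i, w i ∈ Λ := by
      intro i
      simp only [hw]
      split
      · exact ha
      · split
        · exact hb
        · exact hgΛ i
    have hwy : ∀ i ≤ n, dist (w i) (y i) ≤ ε := by
      intro i hi
      rcases Nat.eq_zero_or_pos i with h0' | hpos
      · subst h0'; rw [hw0, hy0]; simpa using hε0
      by_cases hin : n ≤ i
      · have hieq : i = n := le_antisymm hi hin
        rw [hieq, hwn, hyn]; simpa using hε0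
      · have hw_eq : w i = g i := by simp [hw, hpos.ne', hin]
        rw [hw_eq, dist_comm]
        exact hgd i hi
    have hstepd : ∀ i, dist (y i) (y (i + 1)) ≤ r / 4 := by
      intro i
      have hcoef : ((i+1:ℕ):ℝ)/n - (i:ℝ)/n = 1/n := by push_cast; ring
      have heq : y (i+1) - y i = ((1:ℝ)/n) • (b - a) := by
        calc y (i+1) - y i = (((i+1:ℕ):ℝ)/n - (i:ℝ)/n) • (b - a) := by
              simp only [hy]; rw [sub_smul]; abel
          _ = ((1:ℝ)/n) • (b - a) := by rw [hcoef]
      rw [dist_comm, dist_eq_norm, heq, norm_smul, Real.norm_eq_abs,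
        abs_of_pos (div_pos one_pos hnR)]
      rw [div_mul_eq_mul_div, one_mul, div_le_div_iff₀ hnR (by norm_num : (0:ℝ) < 4)]
      have hle : 4 * ‖a - b‖ / r ≤ (n:ℝ) := Nat.le_ceil _
      rw [div_le_iff₀ h0] at hle
      rw [← norm_sub_rev]
      linarith
    have hstep : ∀ i < n, ‖ψ (w i) - ψ (w (i+1))‖ ≤ M := by
      intro i hi
      apply hiso _ (hwΛ i) _ (hwΛ (i+1)) _ hx _ hx'
      have h1 : dist (w i) (y i) ≤ ε := hwy i hi.le
      have h2 : dist (w (i+1)) (y (i+1)) ≤ ε := hwy (i+1) hi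
      have h3 := hstepd i
      have hd : dist (w i) (w (i+1)) ≤ ε + r/4 + ε := by
        calc dist (w i) (w (i+1))
            ≤ dist (w i) (y i) + dist (y i) (y (i+1)) + dist (y (i+1)) (w (i+1)) :=
              dist_triangle4 _ _ _ _
          _ ≤ ε + r/4 + ε := by
              rw [dist_comm (y (i+1))]
              exact add_le_add (add_le_add h1 h3) h2
      rw [← dist_eq_norm]
      calc dist (w i) (w (i+1)) ≤ ε + r/4 + ε := hd
        _ < r := by linarith
    have htel : ψ a - ψ b = ∑ i ∈ Finset.range n, (ψ (w i) - ψ (w (i+1))) := by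
      rw [Finset.sum_range_sub' (fun i => ψ (w i)) n, hw0, hwn]
    have hsum : ‖ψ a - ψ b‖ ≤ (n:ℝ) * M := by
      rw [htel]
      calc ‖∑ i ∈ Finset.range n, (ψ (w i) - ψ (w (i+1)))‖
          ≤ ∑ i ∈ Finset.range n, ‖ψ (w i) - ψ (w (i+1))‖ := norm_sum_le _ _
        _ ≤ ∑ _i ∈ Finset.range n, M :=
            Finset.sum_le_sum (fun i hi => hstep i (Finset.mem_range.mp hi))
        _ = (n:ℝ) * M := by rw [Finset.sum_const, Finset.card_range, nsmul_eq_mul]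
    have hnle : (n:ℝ) ≤ 5 * D / r := by
      have h1 : (n:ℝ) < 4 * ‖a - b‖ / r + 1 :=
        Nat.ceil_lt_add_one (div_nonneg (by positivity) h0.le)
      have h2 : ‖a - b‖ ≤ D := by
        rw [← dist_eq_norm]; exact Metric.dist_le_diam_of_mem hbdd ha hb
      have h3 : 4 * ‖a - b‖ / r ≤ 4 * D / r := by gcongr
      have h4 : (1:ℝ) ≤ D / r := (one_le_div h0).mpr hrD
      have h5 : 4 * D / r + D / r = 5 * D / r := by ring
      linarith
    rw [dist_eq_norm]
    calc ‖ψ a - ψ b‖ ≤ (n:ℝ) * M := hsum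
      _ ≤ 5 * D / r * M := mul_le_mul_of_nonneg_right hnle hM0
  have hdiam : Metric.diam (ψ '' Λ) ≤ 5 * D / r * M := by
    apply Metric.diam_le_of_forall_dist_le hC0
    rintro p ⟨a, ha, rfl⟩ q ⟨b, hb, rfl⟩
    exact key a ha b hb
  rw [div_mul_eq_mul_div, div_le_iff₀ (by linarith : (0:ℝ) < 5 * D)]
  have hmul := mul_le_mul_of_nonneg_right hdiam h0.le
  have heq : 5 * D / r * M * r = M * (5 * D) := by field_simp
  linarith
end

section
/- Let z₀, …, z_d ∈ ℝᵈ be an η-approximate regular simplex (min pairwise distance ≥ (1-η)·max pairwise distance) with minimum edge length at least λ > 0, and suppose S₁, S₂ : ℝᵈ → ℝᵈ are affine maps with max_j ‖S₁(z_j) - S₂(z_j)‖ ≤ ε. Then there is a constant C depending only on d such that if η ≤ 1/C, then ‖S₁(x) - S₂(x)‖ ≤ C·ε·‖x - z₀‖/λ + ε for all x ∈ ℝᵈ. -/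
/-!
Write `vᵢ = zᵢ₊₁ - z₀` and let `M ≥ λ` be one edge length. By polarization the Gram matrix of
the `vᵢ` is within `O(η M²)` of `M²/2 · (1 + δᵢⱼ)`, a matrix bounded below by `M²/2`; for
`η ≪ 1/d` this gives `‖∑ cᵢ vᵢ‖ ≥ (M/2) ‖c‖₂`. Hence the `vᵢ` form a basis and
`x - z₀ = ∑ cᵢ vᵢ` with `∑ |cᵢ| ≤ 2√d ‖x - z₀‖ / M`. The affine map `S₁ - S₂` is at most `ε` at
every vertex, so its linear part is at most `2ε` on every `vᵢ`, and its value at `x` is at most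
`2ε ∑ |cᵢ| + ε`.
-/

open scoped RealInnerProductSpace
open Finset

section FiniteSums

variable {ι : Type*} [Fintype ι]
variable {E : Type*} [NormedAddCommGroup E] [InnerProductSpace ℝ E]

theorem sq_sum_abs_le_card_mul_sum_sq (c : ι → ℝ) :
    (∑ i, |c i|) ^ 2 ≤ Fintype.card ι * ∑ i, c i ^ 2 := by
  simpa [sq_abs] using sq_sum_le_card_mul_sum_sq (s := univ) (f := fun i => |c i|)

theorem mul_sum_abs_le_sqrt_card_mul {r N : ℝ} (hr : 0 ≤ r) (hN : 0 ≤ N) {c : ι → ℝ}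
    (h : r ^ 2 * ∑ i, c i ^ 2 ≤ N ^ 2) :
    r * ∑ i, |c i| ≤ √(Fintype.card ι) * N := by
  refine pow_le_pow_iff_left₀ (by positivity) (by positivity) two_ne_zero |>.1 ?_
  rw [mul_pow, mul_pow, Real.sq_sqrt (Nat.cast_nonneg _)]
  nlinarith [mul_le_mul_of_nonneg_left (sq_sum_abs_le_card_mul_sum_sq c) (sq_nonneg r)]

theorem abs_sum_sum_mul_mul_le (c : ι → ℝ) (a : ι → ι → ℝ) {K : ℝ}
    (ha : ∀ i j, |a i j| ≤ K) :
    |∑ i, ∑ j, c i * c j * a i j| ≤ K * (∑ i, |c i|) ^ 2 := by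
  calc |∑ i, ∑ j, c i * c j * a i j|
      ≤ ∑ i, ∑ j, |c i| * |c j| * K := by
        refine (abs_sum_le_sum_abs _ _).trans (sum_le_sum fun i _ => ?_)
        refine (abs_sum_le_sum_abs _ _).trans (sum_le_sum fun j _ => ?_)
        rw [abs_mul, abs_mul]
        exact mul_le_mul_of_nonneg_left (ha i j) (by positivity)
    _ = K * (∑ i, |c i|) ^ 2 := by
        rw [sq, sum_mul_sum, mul_sum]
        exact sum_congr rfl fun i _ => by rw [mul_sum]; exact sum_congr rfl fun j _ => by ring

theorem sum_sum_mul_mul_ite [DecidableEq ι] (c : ι → ℝ) (m : ℝ) :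
    ∑ i, ∑ j, c i * c j * (if i = j then m else m / 2)
      = m / 2 * (∑ i, c i) ^ 2 + m / 2 * ∑ i, c i ^ 2 := by
  have h : ∀ i j, c i * c j * (if i = j then m else m / 2)
      = m / 2 * (c i * c j) + if i = j then m / 2 * c i ^ 2 else 0 := by
    intro i j
    split_ifs with hij
    · subst hij; ring
    · ring
  simp only [h, sum_add_distrib, sum_ite_eq, mem_univ, if_true, ← mul_sum, sq, sum_mul_sum]

theorem norm_sum_smul_sq (c : ι → ℝ) (v : ι → E) :
    ‖∑ i, c i • v i‖ ^ 2 = ∑ i, ∑ j, c i * c j * ⟪v i, v j⟫ := by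
  rw [← real_inner_self_eq_norm_sq, sum_inner]
  simp only [inner_sum, real_inner_smul_left, real_inner_smul_right]
  exact sum_congr rfl fun i _ => sum_congr rfl fun j _ => by ring

theorem mul_sum_sq_le_norm_sum_smul_sq [DecidableEq ι] {m δ : ℝ} (v : ι → E)
    (hv : ∀ i j, |⟪v i, v j⟫ - if i = j then m else m / 2| ≤ δ)
    (hδ : 0 ≤ δ) (hδm : Fintype.card ι * δ ≤ m / 4) (c : ι → ℝ) :
    m / 4 * ∑ i, c i ^ 2 ≤ ‖∑ i, c i • v i‖ ^ 2 := by
  have hsplit : ‖∑ i, c i • v i‖ ^ 2 = m / 2 * (∑ i, c i) ^ 2 + m / 2 * ∑ i, c i ^ 2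
      + ∑ i, ∑ j, c i * c j * (⟪v i, v j⟫ - if i = j then m else m / 2) := by
    simp only [norm_sum_smul_sq, ← sum_sum_mul_mul_ite, ← sum_add_distrib, mul_sub, add_sub_cancel]
  have herr := neg_le_of_abs_le (abs_sum_sum_mul_mul_le c _ hv)
  have hcs := sq_sum_abs_le_card_mul_sum_sq c
  have hsq : 0 ≤ ∑ i, c i ^ 2 := sum_nonneg fun i _ => sq_nonneg _
  have hm : 0 ≤ m := by linarith [mul_nonneg (Nat.cast_nonneg (Fintype.card ι) : (0:ℝ) ≤ _) hδ]
  nlinarith [mul_le_mul_of_nonneg_left hcs hδ, mul_le_mul_of_nonneg_right hδm hsq,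
    mul_nonneg hm (sq_nonneg (∑ i, c i))]

theorem linearIndependent_of_mul_sum_sq_le_norm_sum_smul_sq {m : ℝ} (hm : 0 < m) {v : ι → E}
    (hv : ∀ c : ι → ℝ, m * ∑ i, c i ^ 2 ≤ ‖∑ i, c i • v i‖ ^ 2) :
    LinearIndependent ℝ v := by
  rw [Fintype.linearIndependent_iff]
  intro c hc i
  have h := hv c
  rw [hc, norm_zero, zero_pow two_ne_zero] at h
  have hsum : ∑ i, c i ^ 2 = 0 :=
    le_antisymm (nonpos_of_mul_nonpos_right h hm) (sum_nonneg fun i _ => sq_nonneg _)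
  exact pow_eq_zero_iff two_ne_zero |>.1 <|
    (sum_eq_zero_iff_of_nonneg fun i _ => sq_nonneg (c i)).1 hsum i (mem_univ i)

end FiniteSums

theorem LinearIndependent.exists_sum_smul_eq {K V ι : Type*} [Fintype ι] [DivisionRing K]
    [AddCommGroup V] [Module K V] [FiniteDimensional K V] {v : ι → V}
    (hv : LinearIndependent K v) (hcard : Fintype.card ι = Module.finrank K V) (x : V) :
    ∃ c : ι → K, ∑ i, c i • v i = x :=
  (Submodule.mem_span_range_iff_exists_fun K).1 <|
    hv.span_eq_top_of_card_eq_finrank' hcard ▸ Submodule.mem_top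

theorem exists_abs_sq_dist_sub_sq_le_of_approx_regular {ι X : Type*} [PseudoMetricSpace X]
    {z : ι → X} {η lam : ℝ} (hη : 0 ≤ η) (hη' : η ≤ 1 / 4)
    (hreg : ∀ i j k l, i ≠ j → k ≠ l → (1 - η) * dist (z k) (z l) ≤ dist (z i) (z j))
    (hmin : ∀ i j, i ≠ j → lam ≤ dist (z i) (z j)) :
    ∃ M, lam ≤ M ∧ ∀ i j, i ≠ j → |dist (z i) (z j) ^ 2 - M ^ 2| ≤ 5 * η * M ^ 2 := by
  by_cases h : ∃ k l : ι, k ≠ l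
  · obtain ⟨k, l, hkl⟩ := h
    refine ⟨dist (z k) (z l), hmin k l hkl, fun i j hij => abs_le.2 ⟨?_, ?_⟩⟩
    · have h := pow_le_pow_left₀ (by nlinarith [dist_nonneg (x := z k) (y := z l)])
        (hreg i j k l hij hkl) 2
      nlinarith [mul_nonneg hη (sq_nonneg (dist (z k) (z l)))]
    · have h := pow_le_pow_left₀ (by nlinarith [dist_nonneg (x := z i) (y := z j)])
        (hreg k l i j hkl hij) 2
      -- `(1 + 5η)(1 - η)² = 1 + (3η - 9η² + 5η³)`
      have hpoly : 0 ≤ 3 * η - 9 * η ^ 2 + 5 * η ^ 3 := by nlinarith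
      nlinarith [mul_le_mul_of_nonneg_left h (by linarith : (0 : ℝ) ≤ 1 + 5 * η),
        mul_nonneg hpoly (sq_nonneg (dist (z i) (z j)))]
  · push Not at h
    exact ⟨lam, le_rfl, fun i j hij => absurd (h i j) hij⟩

theorem abs_inner_edge_vectors_sub_le {E : Type*} [NormedAddCommGroup E] [InnerProductSpace ℝ E]
    {n : ℕ} {z : Fin (n + 1) → E} {m κ : ℝ}
    (hz : ∀ i j, i ≠ j → |dist (z i) (z j) ^ 2 - m| ≤ κ) (i j : Fin n) :
    |⟪z i.succ - z 0, z j.succ - z 0⟫ - if i = j then m else m / 2| ≤ 3 / 2 * κ := by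
  have hi := hz _ _ (Fin.succ_ne_zero i)
  have hκ : 0 ≤ κ := (abs_nonneg _).trans hi
  simp only [dist_eq_norm] at hz hi
  split_ifs with hij
  · subst hij
    rw [real_inner_self_eq_norm_sq]
    linarith
  · have hj := hz _ _ (Fin.succ_ne_zero j)
    have hij' := hz _ _ (Fin.succ_injective _ |>.ne hij)
    have hpol := norm_sub_sq_real (z i.succ - z 0) (z j.succ - z 0)
    rw [sub_sub_sub_cancel_right] at hpol
    rw [abs_le] at hi hj hij' ⊢
    constructor <;> linarith

theorem norm_apply_le_of_norm_apply_vertex_le {E F : Type*} [AddCommGroup E] [Module ℝ E]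
    [NormedAddCommGroup F] [NormedSpace ℝ F] {n : ℕ} (T : E →ᵃ[ℝ] F) {z : Fin (n + 1) → E}
    {ε : ℝ} (hT : ∀ j, ‖T (z j)‖ ≤ ε) {c : Fin n → ℝ} {x : E}
    (hx : ∑ i, c i • (z i.succ - z 0) = x - z 0) :
    ‖T x‖ ≤ 2 * ε * ∑ i, |c i| + ε := by
  have hlin : ∀ p q, T.linear (p - q) = T p - T q := T.linearMap_vsub
  have hTx : T x = ∑ i, c i • (T (z i.succ) - T (z 0)) + T (z 0) := by
    simp only [← hlin, ← map_smul, ← map_sum, hx]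
    rw [hlin, sub_add_cancel]
  calc ‖T x‖ ≤ ∑ i, |c i| * (ε + ε) + ε := by
        rw [hTx]
        refine (norm_add_le _ _).trans (add_le_add ((norm_sum_le _ _).trans ?_) (hT 0))
        refine sum_le_sum fun i _ => ?_
        rw [norm_smul, Real.norm_eq_abs]
        exact mul_le_mul_of_nonneg_left ((norm_sub_le _ _).trans (add_le_add (hT _) (hT 0)))
          (abs_nonneg _)
    _ = 2 * ε * ∑ i, |c i| + ε := by rw [← sum_mul]; ring

/-- Two affine maps that nearly agree on the vertices of an approximate regular
simplex with minimum edge length `λ` nearly agree everywhere. -/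
theorem stmt14 (d : ℕ) :
    ∃ C : ℝ, 0 < C ∧
      ∀ (z : Fin (d + 1) → EuclideanSpace ℝ (Fin d)) (η lam ε : ℝ),
        0 ≤ η → 0 < lam → 0 ≤ ε →
        (∀ i j k l : Fin (d + 1), i ≠ j → k ≠ l →
          (1 - η) * dist (z k) (z l) ≤ dist (z i) (z j)) →
        (∀ i j : Fin (d + 1), i ≠ j → lam ≤ dist (z i) (z j)) →
        ∀ S₁ S₂ : EuclideanSpace ℝ (Fin d) →ᵃ[ℝ] EuclideanSpace ℝ (Fin d),
          (∀ j, ‖S₁ (z j) - S₂ (z j)‖ ≤ ε) →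
          η ≤ 1 / C →
          ∀ x, ‖S₁ x - S₂ x‖ ≤ C * ε * ‖x - z 0‖ / lam + ε := by
  -- the Gram error is `δ = 3/2 · 5η M²` and `mul_sum_sq_le_norm_sum_smul_sq` needs `d δ ≤ M²/4`
  refine ⟨30 * (d + 1), by positivity, ?_⟩
  intro z η lam ε hη hlam hε hreg hmin S₁ S₂ hS hηC x
  have hηd : 30 * (d + 1) * η ≤ 1 := by
    rwa [le_div_iff₀' (by positivity)] at hηC
  have hη4 : η ≤ 1 / 4 := by nlinarith [(Nat.cast_nonneg d : (0 : ℝ) ≤ d)]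
  obtain ⟨M, hlamM, hM⟩ := exists_abs_sq_dist_sub_sq_le_of_approx_regular hη hη4 hreg hmin
  have hM0 : 0 < M := hlam.trans_le hlamM
  set v : Fin d → EuclideanSpace ℝ (Fin d) := fun i => z i.succ - z 0
  have hgram (c : Fin d → ℝ) : (M / 2) ^ 2 * ∑ i, c i ^ 2 ≤ ‖∑ i, c i • v i‖ ^ 2 := by
    have h := mul_sum_sq_le_norm_sum_smul_sq v (abs_inner_edge_vectors_sub_le hM) (by positivity)
      (by simp only [Fintype.card_fin]; nlinarith [sq_nonneg M]) c
    linarith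
  obtain ⟨c, hc⟩ := (linearIndependent_of_mul_sum_sq_le_norm_sum_smul_sq (by positivity) hgram
    |>.exists_sum_smul_eq (by simp) (x - z 0))
  have hcoef := mul_sum_abs_le_sqrt_card_mul (by positivity) (norm_nonneg _) (hgram c)
  rw [hc, Fintype.card_fin] at hcoef
  have hT := norm_apply_le_of_norm_apply_vertex_le (S₁ - S₂) hS hc
  have hsqrt : √(d : ℝ) ≤ d + 1 := by
    nlinarith [Real.sq_sqrt (Nat.cast_nonneg d : (0:ℝ) ≤ d), Real.sqrt_nonneg d]
  have hsum : lam * ∑ i, |c i| ≤ 2 * (d + 1) * ‖x - z 0‖ := by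
    nlinarith [sum_nonneg fun i (_ : i ∈ univ) => abs_nonneg (c i), norm_nonneg (x - z 0)]
  rw [AffineMap.coe_sub, Pi.sub_apply] at hT
  suffices 2 * ε * ∑ i, |c i| ≤ 30 * (d + 1) * ε * ‖x - z 0‖ / lam by linarith
  rw [le_div_iff₀ hlam]
  nlinarith [mul_le_mul_of_nonneg_left hsum hε, mul_nonneg hε (norm_nonneg (x - z 0))]
end

section
/- There exist constants C_m, C'_m > 0 depending only on m such that: if z₁, …, z_m ∈ ℝᵈ form an η-approximate regular simplex with maximum edge length λ, then the (m-1)-th largest singular value of the matrix [z₁ ⋯ z_m] satisfies σ_{m-1}([z₁ ⋯ z_m]) ≥ λ·C_m·(1 - C'_m·η). -/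
open Finset in
/-- The sum-of-coordinates linear functional on `EuclideanSpace ℝ (Fin m)`. -/
def stmt15SumFun (m : ℕ) : EuclideanSpace ℝ (Fin m) →ₗ[ℝ] ℝ where
  toFun w := ∑ i, w i
  map_add' x y := by simp [Finset.sum_add_distrib]
  map_smul' c x := by simp [Finset.mul_sum]

open Finset in
lemma stmt15_kernel_rank (m : ℕ) (hm : 2 ≤ m) :
    Module.finrank ℝ (LinearMap.ker (stmt15SumFun m)) = m - 1 := by
  have hne : Nonempty (Fin m) := ⟨⟨0, by omega⟩⟩
  have hsurj : Function.Surjective (stmt15SumFun m) := by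
    intro c
    refine ⟨EuclideanSpace.single ⟨0, by omega⟩ c, ?_⟩
    simp [stmt15SumFun, EuclideanSpace.single_apply]
  have h1 := LinearMap.finrank_range_add_finrank_ker (stmt15SumFun m)
  rw [LinearMap.range_eq_top.mpr hsurj] at h1
  simp [finrank_euclideanSpace_fin] at h1
  omega

open Finset RealInnerProductSpace in
lemma stmt15_main (m d : ℕ) (z : Fin m → EuclideanSpace ℝ (Fin d)) (η lam : ℝ)
    (hη : 0 ≤ η) (hlam : 0 ≤ lam)
    (hmax : ∀ i j : Fin m, dist (z i) (z j) ≤ lam)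
    (hmin : ∀ i j : Fin m, i ≠ j → (1 - η) * lam ≤ dist (z i) (z j))
    (w : EuclideanSpace ℝ (Fin m)) (hw : ∑ i, w i = 0) :
    lam ^ 2 * (1/2 - m * η) * ∑ i, (w i)^2 ≤ ‖∑ i, w i • z i‖ ^ 2 := by
  set S := ∑ i, w i • z i with hS
  have h1 : ‖S‖ ^ 2 = ∑ i, ∑ j, w i * w j * ⟪z i, z j⟫ := by
    rw [← real_inner_self_eq_norm_sq, hS, sum_inner]
    refine Finset.sum_congr rfl fun i _ => ?_
    rw [inner_sum]
    refine Finset.sum_congr rfl fun j _ => ?_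
    rw [real_inner_smul_left, real_inner_smul_right]; ring
  have hd : ∀ i j, (dist (z i) (z j))^2 = ‖z i‖^2 + ‖z j‖^2 - 2*⟪z i, z j⟫ := by
    intro i j
    rw [dist_eq_norm, norm_sub_sq_real]; ring
  have hA : ∑ i : Fin m, ∑ j : Fin m, w i * w j * ‖z i‖^2 = 0 := by
    have : ∀ i : Fin m, ∑ j : Fin m, w i * w j * ‖z i‖^2
        = (w i * ‖z i‖^2) * ∑ j, w j := fun i => by
      rw [Finset.mul_sum]; exact Finset.sum_congr rfl fun j _ => by ring
    simp [this, hw]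
  have hB : ∑ i : Fin m, ∑ j : Fin m, w i * w j * ‖z j‖^2 = 0 := by
    have : ∀ i : Fin m, ∑ j : Fin m, w i * w j * ‖z j‖^2
        = w i * ∑ j, w j * ‖z j‖^2 := fun i => by
      rw [Finset.mul_sum]; exact Finset.sum_congr rfl fun j _ => by ring
    simp only [this, ← Finset.sum_mul]
    rw [hw, zero_mul]
  have hT : ∑ i, ∑ j, w i * w j * (dist (z i) (z j))^2 = -2 * ‖S‖^2 := by
    have : ∀ i j : Fin m, w i * w j * (dist (z i) (z j))^2
        = w i * w j * ‖z i‖^2 + w i * w j * ‖z j‖^2 - 2 * (w i * w j * ⟪z i, z j⟫) := by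
      intro i j; rw [hd]; ring
    simp only [this, Finset.sum_sub_distrib, Finset.sum_add_distrib, ← Finset.mul_sum]
    rw [hA, hB, h1]; ring
  -- pointwise bound
  have hpt : ∀ i j : Fin m, w i * w j * (dist (z i) (z j))^2
      ≤ w i * w j * lam^2 + (if i = j then -(lam^2) * (w i)^2 else 0)
        + 2*η*lam^2 * (|w i| * |w j|) := by
    intro i j
    by_cases hij : i = j
    · subst hij
      rw [if_pos rfl, dist_self]
      have : (0:ℝ) ≤ 2*η*lam^2 * (|w i| * |w i|) := by positivity
      nlinarith [sq_abs (w i)]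
    · simp only [if_neg hij]
      have hdl : dist (z i) (z j) ≤ lam := hmax i j
      have hdg : (1 - η) * lam ≤ dist (z i) (z j) := hmin i j hij
      have hd0 : 0 ≤ dist (z i) (z j) := dist_nonneg
      have h2 : lam^2 - (dist (z i) (z j))^2 ≤ 2*η*lam^2 := by nlinarith
      have h3 : 0 ≤ lam^2 - (dist (z i) (z j))^2 := by nlinarith
      have h4 : w i * w j * ((dist (z i) (z j))^2 - lam^2)
          ≤ |w i| * |w j| * (lam^2 - (dist (z i) (z j))^2) := by
        calc w i * w j * ((dist (z i) (z j))^2 - lam^2)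
            ≤ |w i * w j * ((dist (z i) (z j))^2 - lam^2)| := le_abs_self _
          _ = |w i| * |w j| * (lam^2 - (dist (z i) (z j))^2) := by
              rw [abs_mul, abs_mul,
                abs_of_nonpos (show dist (z i) (z j)^2 - lam^2 ≤ 0 by linarith)]; ring
      nlinarith [mul_nonneg (abs_nonneg (w i)) (abs_nonneg (w j))]
  have hsum : ∑ i, ∑ j, w i * w j * (dist (z i) (z j))^2
      ≤ -(lam^2) * ∑ i, (w i)^2 + 2*η*lam^2 * (∑ i, |w i|)^2 := by
    calc ∑ i, ∑ j, w i * w j * (dist (z i) (z j))^2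
        ≤ ∑ i, ∑ j, (w i * w j * lam^2 + (if i = j then -(lam^2) * (w i)^2 else 0)
            + 2*η*lam^2 * (|w i| * |w j|)) :=
          Finset.sum_le_sum fun i _ => Finset.sum_le_sum fun j _ => hpt i j
      _ = -(lam^2) * ∑ i, (w i)^2 + 2*η*lam^2 * (∑ i, |w i|)^2 := by
          simp only [Finset.sum_add_distrib]
          have e1 : ∑ i : Fin m, ∑ j : Fin m, w i * w j * lam^2
              = (∑ i, w i) * (∑ j, w j) * lam^2 := by
            rw [Finset.sum_mul_sum, Finset.sum_mul]
            exact Finset.sum_congr rfl fun i _ => by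
              rw [Finset.sum_mul]
          have e2 : ∑ i : Fin m, ∑ j : Fin m, (if i = j then -(lam^2) * (w i)^2 else 0)
              = ∑ i, -(lam^2) * (w i)^2 := by
            refine Finset.sum_congr rfl fun i _ => ?_
            simp
          have e3 : ∑ i : Fin m, ∑ j : Fin m, 2*η*lam^2 * (|w i| * |w j|)
              = 2*η*lam^2 * ((∑ i, |w i|) * (∑ j, |w j|)) := by
            calc ∑ i : Fin m, ∑ j : Fin m, 2*η*lam^2 * (|w i| * |w j|)
                = ∑ i : Fin m, (2*η*lam^2 * |w i|) * ∑ j, |w j| := by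
                  refine Finset.sum_congr rfl fun i _ => ?_
                  rw [Finset.mul_sum]
                  exact Finset.sum_congr rfl fun j _ => by ring
              _ = (∑ i : Fin m, 2*η*lam^2 * |w i|) * ∑ j, |w j| :=
                  (Finset.sum_mul _ _ _).symm
              _ = 2*η*lam^2 * ((∑ i, |w i|) * (∑ j, |w j|)) := by
                  rw [← Finset.mul_sum]; ring
          rw [e1, e2, e3, hw, ← Finset.mul_sum]
          ring
  have hCS : (∑ i, |w i|)^2 ≤ m * ∑ i, (w i)^2 := by
    have := sq_sum_le_card_mul_sum_sq (s := (Finset.univ : Finset (Fin m))) (f := fun i => |w i|)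
    simpa [sq_abs] using this
  nlinarith [hsum, hT, sq_nonneg lam,
    mul_le_mul_of_nonneg_left hCS (by positivity : (0:ℝ) ≤ 2*η*lam^2)]

/-- Lower bound on the `(m-1)`-th largest singular value of the matrix whose
columns are the vertices of an `η`-approximate regular simplex with maximum
edge length `λ`.  The singular value bound is expressed via the Courant–Fischer
characterization: there is a subspace of dimension `m-1` of coefficient vectors
on which the matrix expands norms at rate at least `λ C_m (1 - C'_m η)`. -/
theorem stmt15 (m : ℕ) (hm : 2 ≤ m) :
    ∃ Cm C'm : ℝ, 0 < Cm ∧ 0 < C'm ∧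
      ∀ (d : ℕ) (z : Fin m → EuclideanSpace ℝ (Fin d)) (η lam : ℝ),
        0 ≤ η → η < 1 →
        (∀ i j : Fin m, dist (z i) (z j) ≤ lam) →
        (∃ i j : Fin m, i ≠ j ∧ dist (z i) (z j) = lam) →
        (∀ i j : Fin m, i ≠ j → (1 - η) * lam ≤ dist (z i) (z j)) →
        ∃ W : Submodule ℝ (EuclideanSpace ℝ (Fin m)),
          Module.finrank ℝ W = m - 1 ∧
          ∀ w ∈ W, lam * Cm * (1 - C'm * η) * ‖w‖ ≤ ‖∑ i, w i • z i‖ := by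
  have hm0 : (0:ℝ) < m := by
    have : (2:ℝ) ≤ m := by exact_mod_cast hm
    linarith
  refine ⟨1/2, 4*m, by norm_num, by linarith, ?_⟩
  intro d z η lam hη hη1 hmax hattain hmin
  obtain ⟨i0, j0, hij, heq⟩ := hattain
  have hlam : 0 ≤ lam := heq ▸ dist_nonneg
  refine ⟨LinearMap.ker (stmt15SumFun m), stmt15_kernel_rank m hm, ?_⟩
  intro w hwker
  have hw : ∑ i, w i = 0 := by
    have := LinearMap.mem_ker.mp hwker
    simpa [stmt15SumFun] using this
  have hN0 : (0:ℝ) ≤ ‖∑ i, w i • z i‖ := norm_nonneg _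
  by_cases hc : 1 - 4*(m:ℝ)*η ≤ 0
  · have hL : lam * (1/2) * (1 - 4*(m:ℝ)*η) * ‖w‖ ≤ 0 := by
      have h1 : 0 ≤ lam * (1/2) * ‖w‖ := by positivity
      nlinarith
    linarith
  · push_neg at hc
    have hc' : 0 < 1 - 4*(m:ℝ)*η := hc
    have key := stmt15_main m d z η lam hη hlam hmax hmin w hw
    have hnw : ‖w‖^2 = ∑ i, (w i)^2 := by
      rw [EuclideanSpace.norm_eq, Real.sq_sqrt (by positivity)]
      exact Finset.sum_congr rfl fun i _ => by rw [Real.norm_eq_abs, sq_abs]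
    rw [← hnw] at key
    have h5 : 0 ≤ lam^2 * ‖w‖^2 * (η * (1 - 4*(m:ℝ)*η)) :=
      mul_nonneg (by positivity) (mul_nonneg hη hc'.le)
    have hmc : (0:ℝ) ≤ m := hm0.le
    have hL2 : (lam * (1/2) * (1 - 4*(m:ℝ)*η) * ‖w‖)^2
        ≤ lam^2 * (1/2 - (m:ℝ) * η) * ‖w‖^2 := by
      nlinarith [h5, sq_nonneg (lam * ‖w‖), mul_nonneg hmc h5]
    have hL0 : 0 ≤ lam * (1/2) * (1 - 4*(m:ℝ)*η) * ‖w‖ :=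
      mul_nonneg (mul_nonneg (mul_nonneg hlam (by norm_num)) hc'.le) (norm_nonneg w)
    nlinarith [hL2, key, hL0, hN0]
end
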